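/- arXiv:1601.02328 — 7 statements merged into one kernel-verified Lean document; each statement's English description precedes it below -/
import Mathlib

section
/- The extended Gray map Φ : Rⁿ → (ZMod 2)^{3n} is a distance-preserving map from Rⁿ with the Lee distance to (ZMod 2)^{3n} with the Hamming distance: for all x, y ∈ Rⁿ, the Hamming distance between Φ(x) and Φ(y) equals d_L(x, y) = Σᵢ w_L(xᵢ - yᵢ). -/
open Polynomial

noncomputable section

/-- The ring `R = F₂ + uF₂ + u²F₂` with `u³ = u`, realized as `(ZMod 2)[X] ⧸ ⟨X³ - X⟩`. -/
abbrev R : Type := Polynomial (ZMod 2) ⧸ Ideal.span ({X ^ 3 - X} : Set (Polynomial (ZMod 2)))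

/-- `u` is the residue class of `X` in `R`. -/
def u : R := Ideal.Quotient.mk _ (X : Polynomial (ZMod 2))

/-- The element `a + u·b + u²·c` of `R`. -/
def elt (a b c : ZMod 2) : R :=
  algebraMap (ZMod 2) R a + algebraMap (ZMod 2) R b * u + algebraMap (ZMod 2) R c * u ^ 2

/-- `Φ` is the Gray map: `Φ(a + u·b + u²·c) = (a, a + c, b)`. -/
def GraySpec (Φ : R → Fin 3 → ZMod 2) : Prop :=
  ∀ a b c : ZMod 2, Φ (elt a b c) = ![a, a + c, b]

/-- The coordinatewise extension of the Gray map, `Rⁿ → (ZMod 2)^{3n}`. -/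
def grayExt (Φ : R → Fin 3 → ZMod 2) (n : ℕ) (x : Fin n → R) :
    Fin n × Fin 3 → ZMod 2 :=
  fun p => Φ (x p.1) p.2

/-! Every element of `R` is `a + u·b + u²·c`, and in these coordinates `Φ` is additive, so the
Hamming distance of `Φ r` and `Φ s` is the Hamming weight of `Φ (r - s)`. That weight agrees with
the Lee weight on each of the eight elements of `R`, and both distances add up over coordinates. -/

lemma u_pow_three : u ^ 3 = u := by
  have h : Ideal.Quotient.mk (Ideal.span {X ^ 3 - X}) (X ^ 3 - X : (ZMod 2)[X]) = 0 :=
    Ideal.Quotient.eq_zero_iff_mem.mpr (Ideal.subset_span rfl)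
  rwa [map_sub, map_pow, sub_eq_zero] at h

lemma elt_add (a b c a' b' c' : ZMod 2) :
    elt a b c + elt a' b' c' = elt (a + a') (b + b') (c + c') := by
  simp only [elt, map_add]; ring

lemma elt_sub (a b c a' b' c' : ZMod 2) :
    elt a b c - elt a' b' c' = elt (a - a') (b - b') (c - c') := by
  simp only [elt, map_sub]; ring

lemma u_mul_elt (a b c : ZMod 2) : u * elt a b c = elt 0 (a + c) b := by
  simp only [elt, map_add, map_zero]
  linear_combination algebraMap (ZMod 2) R c * u_pow_three

lemma exists_elt_eq (r : R) : ∃ a b c, elt a b c = r := by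
  obtain ⟨p, rfl⟩ := Ideal.Quotient.mk_surjective r
  induction p using Polynomial.induction_on with
  | C a => exact ⟨a, 0, 0, by simp only [elt, map_zero, zero_mul, add_zero]; rfl⟩
  | add p q hp hq =>
    obtain ⟨a, b, c, hp⟩ := hp
    obtain ⟨a', b', c', hq⟩ := hq
    exact ⟨a + a', b + b', c + c', by rw [map_add, ← hp, ← hq, elt_add]⟩
  | monomial m a ih =>
    obtain ⟨a', b', c', h⟩ := ih
    refine ⟨0, a' + c', b', ?_⟩
    have hX : C a * X ^ (m + 1) = X * (C a * X ^ m) := by ring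
    rw [hX, map_mul, ← h, ← u_mul_elt]
    rfl

lemma hammingDist_uncurry {ι κ β : Type*} [Fintype ι] [Fintype κ] [DecidableEq β]
    (f g : ι → κ → β) :
    hammingDist (Function.uncurry f) (Function.uncurry g) = ∑ i, hammingDist (f i) (g i) := by
  simp only [hammingDist, Finset.card_filter, Fintype.sum_prod_type, Function.uncurry_apply_pair]
  rfl

namespace GraySpec

variable {Φ : R → Fin 3 → ZMod 2}

lemma map_sub (hΦ : GraySpec Φ) (r s : R) : Φ (r - s) = Φ r - Φ s := by
  obtain ⟨a, b, c, rfl⟩ := exists_elt_eq r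
  obtain ⟨a', b', c', rfl⟩ := exists_elt_eq s
  rw [elt_sub, hΦ, hΦ, hΦ]
  ext i
  fin_cases i <;> simp [add_sub_add_comm]

lemma hammingNorm_eq (hΦ : GraySpec Φ) {wL : R → ℕ}
    (h0 : wL 0 = 0) (h1 : wL 1 = 2) (hu : wL u = 1) (hu2 : wL (u ^ 2) = 1)
    (h1u : wL (1 + u) = 3) (h1u2 : wL (1 + u ^ 2) = 1)
    (huu2 : wL (u + u ^ 2) = 2) (h1uu2 : wL (1 + u + u ^ 2) = 2) (r : R) :
    hammingNorm (Φ r) = wL r := by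
  obtain ⟨a, b, c, rfl⟩ := exists_elt_eq r
  rw [hΦ]
  have hZ2 : ∀ t : ZMod 2, t = 0 ∨ t = 1 := by decide
  rcases hZ2 a with rfl | rfl <;> rcases hZ2 b with rfl | rfl <;> rcases hZ2 c with rfl | rfl <;>
    simp only [elt, map_zero, map_one, zero_mul, one_mul, add_zero, zero_add,
      h0, h1, hu, hu2, h1u, h1u2, huu2, h1uu2] <;> decide

end GraySpec

/-- The extended Gray map is distance preserving from (`Rⁿ`, Lee distance) to
(`(ZMod 2)^{3n}`, Hamming distance). -/
theorem grayExt_distance_preserving (n : ℕ) (Φ : R → Fin 3 → ZMod 2) (hΦ : GraySpec Φ)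
    (wL : R → ℕ)
    (h0 : wL 0 = 0) (h1 : wL 1 = 2) (hu : wL u = 1) (hu2 : wL (u ^ 2) = 1)
    (h1u : wL (1 + u) = 3) (h1u2 : wL (1 + u ^ 2) = 1)
    (huu2 : wL (u + u ^ 2) = 2) (h1uu2 : wL (1 + u + u ^ 2) = 2) :
    ∀ x y : Fin n → R,
      hammingDist (grayExt Φ n x) (grayExt Φ n y) = ∑ i, wL (x i - y i) := by
  intro x y
  refine (hammingDist_uncurry (fun i => Φ (x i)) (fun i => Φ (y i))).trans
    (Finset.sum_congr rfl fun i _ => ?_)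
  rw [hammingDist_comm, hammingDist_eq_hammingNorm, neg_add_eq_sub, ← hΦ.map_sub,
    hΦ.hammingNorm_eq h0 h1 hu hu2 h1u h1u2 huu2 h1uu2]
end
end

section
/- For all x, y ∈ R, the standard inner product of the Gray images, ⟨Φ(x), Φ(y)⟩ = Σ_{j=0}^{2} Φ(x)_j · Φ(y)_j ∈ ZMod 2, equals the coefficient of u² in the product x·y when x·y is written in the basis {1, u, u²}; in particular, if x·y = 0 in R then ⟨Φ(x), Φ(y)⟩ = 0. -/
open Polynomial

noncomputable section

lemma elt_mul (a b c d e f : ZMod 2) :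
    elt a b c * elt d e f =
      elt (a * d) (a * e + b * d + b * f + c * e) (a * f + b * e + c * d + c * f) := by
  simp only [elt, map_add, map_mul]
  linear_combination (algebraMap (ZMod 2) R b * algebraMap (ZMod 2) R f
    + algebraMap (ZMod 2) R c * algebraMap (ZMod 2) R e
    + algebraMap (ZMod 2) R c * algebraMap (ZMod 2) R f * u) * u_pow_three

lemma monic_X_pow_three_sub_X : (X ^ 3 - X : (ZMod 2)[X]).Monic :=
  monic_X_pow_sub (by simp)

/-- `R` is definitionally `AdjoinRoot (X ^ 3 - X)`, and `u` its root. -/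
def uPowerBasis : PowerBasis (ZMod 2) R := AdjoinRoot.powerBasis' monic_X_pow_three_sub_X

lemma uPowerBasis_dim : uPowerBasis.dim = 3 := by
  change (X ^ 3 - X : (ZMod 2)[X]).natDegree = 3
  compute_degree!

def uBasis : Module.Basis (Fin 3) (ZMod 2) R :=
  uPowerBasis.basis.reindex (finCongr uPowerBasis_dim)

lemma uBasis_apply (j : Fin 3) : uBasis j = u ^ (j : ℕ) := by
  rw [uBasis, Module.Basis.reindex_apply, PowerBasis.basis_eq_pow]
  rfl

lemma elt_eq_uBasis_equivFun_symm (a b c : ZMod 2) :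
    elt a b c = uBasis.equivFun.symm ![a, b, c] := by
  simp [Module.Basis.equivFun_symm_apply, Fin.sum_univ_three, uBasis_apply, elt,
    Algebra.algebraMap_eq_smul_one]

lemma elt_inj {a b c a' b' c' : ZMod 2} :
    elt a b c = elt a' b' c' ↔ a = a' ∧ b = b' ∧ c = c' := by
  refine ⟨fun h => ?_, by rintro ⟨rfl, rfl, rfl⟩; rfl⟩
  rw [elt_eq_uBasis_equivFun_symm, elt_eq_uBasis_equivFun_symm] at h
  have h' := uBasis.equivFun.symm.injective h
  exact ⟨congrFun h' 0, congrFun h' 1, congrFun h' 2⟩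

lemma exists_eq_elt (x : R) : ∃ a b c, x = elt a b c := by
  refine ⟨uBasis.equivFun x 0, uBasis.equivFun x 1, uBasis.equivFun x 2, ?_⟩
  rw [elt_eq_uBasis_equivFun_symm, eq_comm, LinearEquiv.symm_apply_eq]
  ext j
  fin_cases j <;> rfl

lemma gray_inner_elt {Φ : R → Fin 3 → ZMod 2} (hΦ : GraySpec Φ) (a b c d e f : ZMod 2) :
    ∑ j, Φ (elt a b c) j * Φ (elt d e f) j = a * f + b * e + c * d + c * f := by
  rw [hΦ, hΦ, Fin.sum_univ_three]
  simp only [Matrix.cons_val_zero, Matrix.cons_val_one, Matrix.cons_val_two,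
    Matrix.head_cons, Matrix.tail_cons]
  linear_combination (a * d) * (by decide : (2 : ZMod 2) = 0)

/-- The inner product `⟨Φ(x), Φ(y)⟩` equals the coefficient of `u²` in `x·y` written in the
basis `{1, u, u²}`; in particular `x·y = 0` implies `⟨Φ(x), Φ(y)⟩ = 0`. -/
theorem gray_inner_eq_u_sq_coeff (Φ : R → Fin 3 → ZMod 2) (hΦ : GraySpec Φ) :
    (∀ x y : R, ∀ a b c : ZMod 2, x * y = elt a b c → ∑ j, Φ x j * Φ y j = c) ∧
    (∀ x y : R, x * y = 0 → ∑ j, Φ x j * Φ y j = 0) := by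
  have inner_eq_coeff : ∀ x y : R, ∀ a b c : ZMod 2, x * y = elt a b c →
      ∑ j, Φ x j * Φ y j = c := by
    intro x y a b c hxy
    obtain ⟨a₁, b₁, c₁, rfl⟩ := exists_eq_elt x
    obtain ⟨a₂, b₂, c₂, rfl⟩ := exists_eq_elt y
    rw [elt_mul] at hxy
    rw [gray_inner_elt hΦ, (elt_inj.1 hxy).2.2]
  have elt_zero : elt 0 0 0 = 0 := by simp [elt]
  exact ⟨inner_eq_coeff, fun x y h => inner_eq_coeff x y 0 0 0 (h.trans elt_zero.symm)⟩
end
end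

section
/- Let n be an odd positive integer. Then every ideal of the quotient ring R[Y] ⧸ ⟨Yⁿ - 1⟩ is principal; that is, the ring ((ZMod 2)[X] ⧸ ⟨X³ - X⟩)[Y] ⧸ ⟨Yⁿ - 1⟩ is a principal ideal ring. -/
open Polynomial

noncomputable section

instance R.instCommRing : CommRing R := Ideal.Quotient.commRing _

/-!
Let `u` be the class of `X` in `R` and `v = u² + u`. Since `u³ = u` in characteristic 2,
`v² = 0`, and `R ⧸ (v) ≅ F₂[X] ⧸ (X² + X)` is semisimple. For odd `n` the polynomial `Yⁿ - 1`
is separable, so `R[Y] ⧸ (Yⁿ - 1)` modulo `v`, which is `(R ⧸ (v))[Y] ⧸ (Yⁿ - 1)`, is a finite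
reduced ring, hence semisimple. A commutative ring with a square-zero element `v` modulo which
it is semisimple is a principal ideal ring: lifting idempotents splits it into a part where an
ideal `I` is everything and a part where `I` lies in `(v)` and equals `v (I : v)`.
-/

theorem isSemisimpleRing_quotient_span_of_monic_of_separable {A : Type*} [CommRing A]
    [IsSemisimpleRing A] {f : A[X]} (hm : f.Monic) (hs : f.Separable) :
    IsSemisimpleRing (A[X] ⧸ Ideal.span {f}) := by
  have : IsReduced (A[X] ⧸ Ideal.span {f}) :=
    (Ideal.isRadical_iff_quotient_reduced _).mp
      (isRadical_iff_span_singleton.mp hs.squarefree.isRadical)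
  have : Module.Finite A (AdjoinRoot f) := (AdjoinRoot.powerBasis' hm).finite
  have : IsArtinianRing (A[X] ⧸ Ideal.span {f}) := IsArtinianRing.of_finite A (AdjoinRoot f)
  exact IsArtinianRing.isSemisimpleRing_of_isReduced _

theorem isSemisimpleRing_quotient_span_mk_C {A : Type*} [CommRing A] (a : A) {f : A[X]}
    [IsSemisimpleRing (A ⧸ Ideal.span {a})]
    (hm : (f.map (Ideal.Quotient.mk (Ideal.span {a}))).Monic)
    (hs : (f.map (Ideal.Quotient.mk (Ideal.span {a}))).Separable) :
    IsSemisimpleRing ((A[X] ⧸ Ideal.span {f}) ⧸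
      Ideal.span {Ideal.Quotient.mk (Ideal.span {f}) (C a)}) := by
  have := isSemisimpleRing_quotient_span_of_monic_of_separable hm hs
  have hspan : Ideal.span {Ideal.Quotient.mk (Ideal.span {f}) (C a)} =
      (Ideal.span {a}).map (AdjoinRoot.of f) := by
    rw [Ideal.map_span, Set.image_singleton]; rfl
  rw [hspan]
  exact (AdjoinRoot.quotAdjoinRootEquivQuotPolynomialQuot _ f).symm.isSemisimpleRing

section SquareZero

variable {D : Type*} [CommRing D] {v : D}

theorem sq_eq_zero_of_mem_span_singleton (hv : v ^ 2 = 0) {a : D} (ha : a ∈ Ideal.span {v}) :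
    a ^ 2 = 0 := by
  obtain ⟨c, rfl⟩ := Ideal.mem_span_singleton'.mp ha
  rw [mul_pow, hv, mul_zero]

theorem mul_eq_mul_of_mk_eq_mk (hv : v ^ 2 = 0) {a b : D}
    (h : Ideal.Quotient.mk (Ideal.span {v}) a = Ideal.Quotient.mk _ b) : v * a = v * b := by
  obtain ⟨c, hc⟩ := Ideal.mem_span_singleton'.mp (Ideal.Quotient.eq.mp h)
  linear_combination (-v) * hc + c * hv

theorem IsIdempotentElem.mem_of_sq_sub_eq_zero {I : Ideal D} {e x : D} (he : IsIdempotentElem e)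
    (hx : x ∈ I) (h : (e - x) ^ 2 = 0) : e ∈ I := by
  have : e = e * (2 * x - x ^ 2) := by linear_combination e * h - (1 + e - 2 * x) * he.eq
  rw [this]
  exact I.mul_mem_left e (I.sub_mem (I.mul_mem_left 2 hx) (I.pow_mem_of_mem hx 2 two_pos))

theorem isPrincipalIdealRing_of_sq_eq_zero (hv : v ^ 2 = 0)
    [IsSemisimpleRing (D ⧸ Ideal.span {v})] : IsPrincipalIdealRing D := by
  refine ⟨fun I ↦ ?_⟩
  set π := Ideal.Quotient.mk (Ideal.span {v})
  have hπ : Function.Surjective π := Ideal.Quotient.mk_surjective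
  have hnil : ∀ a ∈ RingHom.ker π, IsNilpotent a := fun a ha ↦
    ⟨2, sq_eq_zero_of_mem_span_singleton hv (by rwa [Ideal.mk_ker] at ha)⟩
  obtain ⟨e₀, he₀, hIe₀⟩ := IsSemisimpleRing.ideal_eq_span_idempotent (I.map π)
  obtain ⟨e, he, rfl⟩ := exists_isIdempotentElem_eq_of_ker_isNilpotent π hnil e₀ (hπ e₀) he₀
  obtain ⟨f₀, -, hJf⟩ := IsSemisimpleRing.ideal_eq_span_idempotent ((I.colon {v}).map π)
  obtain ⟨F, hFJ, hF⟩ := (Ideal.mem_map_iff_of_surjective π hπ).mp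
    (hJf ▸ Ideal.mem_span_singleton_self f₀)
  rw [Submodule.mem_colon_singleton, smul_eq_mul] at hFJ
  have heI : e ∈ I := by
    obtain ⟨x, hxI, hx⟩ := (Ideal.mem_map_iff_of_surjective π hπ).mp
      (hIe₀ ▸ Ideal.mem_span_singleton_self (π e))
    exact he.mem_of_sq_sub_eq_zero hxI
      (sq_eq_zero_of_mem_span_singleton hv (Ideal.Quotient.eq.mp hx.symm))
  refine ⟨e + F * v * (1 - e), le_antisymm (fun y hy ↦ ?_) ?_⟩
  · obtain ⟨c, hc⟩ := Ideal.mem_span_singleton'.mp (hIe₀ ▸ Ideal.mem_map_of_mem π hy)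
    obtain ⟨d, hd⟩ : ∃ d, d * v = y * (1 - e) := by
      refine Ideal.mem_span_singleton'.mp (Ideal.Quotient.eq_zero_iff_mem.mp ?_)
      rw [map_mul, map_sub, map_one, ← hc]
      linear_combination (-c) * he₀.eq
    have hdJ : d ∈ I.colon {v} := by
      rw [Submodule.mem_colon_singleton, smul_eq_mul, hd]
      exact I.mul_mem_right _ hy
    obtain ⟨c', hc'⟩ := Ideal.mem_span_singleton'.mp (hJf ▸ Ideal.mem_map_of_mem π hdJ)
    obtain ⟨b, rfl⟩ := hπ c'
    have hvd : v * d = v * (b * F) := mul_eq_mul_of_mk_eq_mk hv (by rw [map_mul, hF, hc'])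
    refine Ideal.mem_span_singleton'.mpr ⟨y * e + b * (1 - e), ?_⟩
    linear_combination (2 * y - y * F * v - b + b * F * v) * he.eq + (1 - e) * hd - (1 - e) * hvd
  · rw [Ideal.submodule_span_eq, Ideal.span_singleton_le_iff_mem]
    exact I.add_mem heI (I.mul_mem_right _ hFJ)

end SquareZero

theorem separable_X_sq_add_X {K : Type*} [CommRing K] [CharP K 2] :
    (X ^ 2 + X : K[X]).Separable := by
  rw [separable_def]
  convert isCoprime_one_right
  rw [derivative_add, derivative_X_pow, derivative_X]
  simp [CharTwo.two_eq_zero]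

theorem separable_X_pow_sub_one {K : Type*} [CommRing K] [CharP K 2] {n : ℕ} (hn : Odd n) :
    (X ^ n - 1 : K[X]).Separable := by
  simpa using separable_X_pow_sub_C_unit (1 : Kˣ)
    (by rw [natCast_eq_one_of_odd_of_two_eq_zero hn CharTwo.two_eq_zero]; exact isUnit_one)

namespace R

def u : R := Ideal.Quotient.mk _ X

theorem sq_add_self_sq : (u ^ 2 + u) ^ 2 = 0 := by
  have h : ((X ^ 2 + X) ^ 2 : (ZMod 2)[X]) = X * (X ^ 3 - X) := by
    linear_combination (X ^ 3 + X ^ 2) * (CharTwo.two_eq_zero (R := (ZMod 2)[X]))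
  simp only [u, ← map_pow, ← map_add]
  rw [h, Ideal.Quotient.eq_zero_iff_mem]
  exact Ideal.mul_mem_left _ _ (Ideal.mem_span_singleton_self _)

instance isSemisimpleRing_quotient_span_sq_add_self :
    IsSemisimpleRing (R ⧸ Ideal.span {u ^ 2 + u}) := by
  have hle : Ideal.span {X ^ 3 - X} ≤ Ideal.span {(X ^ 2 + X : (ZMod 2)[X])} := by
    rw [Ideal.span_singleton_le_span_singleton]
    exact ⟨X + 1, by linear_combination (-(X ^ 2 + X)) * (CharTwo.two_eq_zero (R := (ZMod 2)[X]))⟩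
  have hspan : Ideal.span {u ^ 2 + u} =
      (Ideal.span {(X ^ 2 + X : (ZMod 2)[X])}).map (Ideal.Quotient.mk _) := by
    rw [Ideal.map_span, Set.image_singleton]; rfl
  have := isSemisimpleRing_quotient_span_of_monic_of_separable
    (monic_X_pow_add (p := X) (by simp)) (separable_X_sq_add_X (K := ZMod 2))
  rw [hspan]
  exact ((DoubleQuot.quotQuotEquivQuotSup _ _).trans
    (Ideal.quotEquivOfEq (sup_eq_right.mpr hle))).symm.isSemisimpleRing

end R

theorem quotient_isPrincipalIdealRing_general (n : ℕ) (hodd : Odd n) :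
    IsPrincipalIdealRing (Polynomial R ⧸ Ideal.span ({X ^ n - 1} : Set (Polynomial R))) := by
  let π := Ideal.Quotient.mk (Ideal.span {R.u ^ 2 + R.u})
  have hmap : (X ^ n - 1 : R[X]).map π = X ^ n - 1 := by
    rw [Polynomial.map_sub, Polynomial.map_pow, Polynomial.map_X, Polynomial.map_one]
  have hmonic : (X ^ n - 1 : (R ⧸ Ideal.span {R.u ^ 2 + R.u})[X]).Monic := by
    rw [← C_1]; exact monic_X_pow_sub_C 1 hodd.pos.ne'
  have hsep : (X ^ n - 1 : (R ⧸ Ideal.span {R.u ^ 2 + R.u})[X]).Separable := by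
    have := (separable_X_pow_sub_one (K := ZMod 2) hodd).map (f := π.comp (algebraMap _ R))
    rwa [Polynomial.map_sub, Polynomial.map_pow, Polynomial.map_X, Polynomial.map_one] at this
  have := isSemisimpleRing_quotient_span_mk_C (R.u ^ 2 + R.u) (f := X ^ n - 1)
    (hmap ▸ hmonic) (hmap ▸ hsep)
  exact isPrincipalIdealRing_of_sq_eq_zero (v := Ideal.Quotient.mk _ (C (R.u ^ 2 + R.u)))
    (by rw [← map_pow, ← C_pow, R.sq_add_self_sq, C_0, map_zero])

/-- For odd `n`, every ideal of `R[Y] ⧸ ⟨Yⁿ - 1⟩` is principal. -/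
theorem quotient_isPrincipalIdealRing (n : ℕ) (hodd : Odd n) (hpos : 0 < n) :
    IsPrincipalIdealRing (Polynomial R ⧸ Ideal.span ({X ^ n - 1} : Set (Polynomial R))) :=
  quotient_isPrincipalIdealRing_general n hodd
end
end

section
/- Let n be an odd positive integer and let a, g ∈ (ZMod 2)[Y] be monic polynomials with a ∣ g and g ∣ (Yⁿ - 1) in (ZMod 2)[Y]. Let S = (ZMod 2)[X] ⧸ ⟨X²⟩ with w the residue class of X, and let C_w be the ideal of S[Y] ⧸ ⟨Yⁿ - 1⟩ generated by the image of g + w·a (where g and a are mapped into S[Y] via the inclusion ZMod 2 → S). Then the cardinality of C_w is 2^{2n − deg g − deg a}. -/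
/-!
Reduction modulo `w` maps `C_w` onto the ideal `⟨g⟩` of `𝔽₂[Y]/(Yⁿ - 1)`, and the part of `C_w`
killed by it is `w·⟨a⟩`, a copy of `⟨a⟩` since multiplication by `w` is injective on
`𝔽₂[Y]/(Yⁿ - 1)`. Writing `Yⁿ - 1 = g h` and `g = a b`: an element `(u + w v)(g + w a)` reduces to
`0` iff `h ∣ u`, and then it equals `w a (u/h + v b)`; conversely `w a ∈ C_w` because `h` and `b`
are coprime, `Yⁿ - 1` being squarefree for odd `n`. Since `⟨d⟩` has `2^{n - deg d}` elements for
monic `d ∣ Yⁿ - 1`, we get `|C_w| = 2^{n - deg g} · 2^{n - deg a}`.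
-/

open Polynomial

noncomputable section

/-- The chain ring `S = F₂ + wF₂` with `w² = 0`, realized as `(ZMod 2)[X] ⧸ ⟨X²⟩`. -/
abbrev S : Type := Polynomial (ZMod 2) ⧸ Ideal.span ({X ^ 2} : Set (Polynomial (ZMod 2)))

/-- `w` is the residue class of `X` in `S`. -/
def w : S := Ideal.Quotient.mk _ (X : Polynomial (ZMod 2))

instance : CommRing S := Ideal.Quotient.commRing _

theorem AddSubgroup.card_eq_card_map_mul_card_inf_ker {G H : Type*} [AddGroup G] [AddGroup H]
    (f : G →+ H) (K : AddSubgroup G) :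
    Nat.card K = Nat.card (K.map f) * Nat.card (K ⊓ f.ker : AddSubgroup G) := by
  rw [(f.domRestrict K).ker.card_eq_card_quotient_mul_card_addSubgroup,
    Nat.card_congr (QuotientAddGroup.quotientKerEquivRange _).toEquiv,
    AddMonoidHom.domRestrict_range, AddMonoidHom.ker_domRestrict,
    ← AddSubgroup.inf_addSubgroupOf_left,
    Nat.card_congr (AddSubgroup.addSubgroupOfEquivOfLe inf_le_left).toEquiv]

theorem Ideal.toAddSubgroup_map_of_surjective {R T : Type*} [Ring R] [Ring T] {f : R →+* T}
    (hf : Function.Surjective f) (I : Ideal R) :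
    (I.map f).toAddSubgroup = I.toAddSubgroup.map f.toAddMonoidHom :=
  AddSubgroup.ext fun _ => Ideal.mem_map_iff_of_surjective f hf

theorem Polynomial.natCard_quotient_span_of_monic {R : Type*} [CommRing R] {d : R[X]}
    (hd : d.Monic) : Nat.card (R[X] ⧸ Ideal.span {d}) = Nat.card R ^ d.natDegree := by
  change Nat.card (AdjoinRoot d) = _
  rw [Nat.card_congr (AdjoinRoot.powerBasis' hd).basis.equivFun.toEquiv, Nat.card_fun,
    Nat.card_fin, AdjoinRoot.powerBasis'_dim]

theorem Polynomial.natCard_span_mk_of_dvd {K : Type*} [Field K] [Finite K] {f d : K[X]}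
    (hf : f.Monic) (hd : d.Monic) (hdf : d ∣ f) :
    Nat.card (Ideal.span {Ideal.Quotient.mk (Ideal.span {f}) d}) =
      Nat.card K ^ (f.natDegree - d.natDegree) := by
  have hle : Ideal.span {f} ≤ Ideal.span {d} := Ideal.span_singleton_le_span_singleton.mpr hdf
  have hmap : (Ideal.span {d}).map (Ideal.Quotient.mk (Ideal.span {f})) =
      Ideal.span {Ideal.Quotient.mk (Ideal.span {f}) d} := by
    rw [Ideal.map_span, Set.image_singleton]
  have hcard := Submodule.card_eq_card_quotient_mul_card
    (Ideal.span {Ideal.Quotient.mk (Ideal.span {f}) d})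
  rw [← hmap, Nat.card_congr (DoubleQuot.quotQuotEquivQuotOfLE hle).toEquiv,
    natCard_quotient_span_of_monic hf, natCard_quotient_span_of_monic hd] at hcard
  have hdeg : d.natDegree ≤ f.natDegree := natDegree_le_of_dvd hdf hf.ne_zero
  rw [← hmap]
  refine Nat.eq_of_mul_eq_mul_right (pow_pos (Nat.card_pos (α := K)) d.natDegree) ?_
  rw [← hcard, ← pow_add, Nat.sub_add_cancel hdeg]

namespace S

theorem algebraMap_eq_mk_C (c : ZMod 2) : algebraMap (ZMod 2) S c = Ideal.Quotient.mk _ (C c) :=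
  rfl

theorem w_mul_w : w * w = 0 := by
  rw [w, ← map_mul, ← sq]
  exact Ideal.Quotient.eq_zero_iff_mem.mpr (Ideal.subset_span rfl)

def residue : S →+* ZMod 2 :=
  Ideal.Quotient.lift _ (evalRingHom 0) fun p hp => by
    obtain ⟨q, rfl⟩ := Ideal.mem_span_singleton'.mp hp
    simp

@[simp] theorem residue_algebraMap (c : ZMod 2) : residue (algebraMap (ZMod 2) S c) = c := by
  simp [residue, algebraMap_eq_mk_C]

@[simp] theorem residue_w : residue w = 0 := by
  simp [residue, w]

theorem exists_eq_add_mul_w (s : S) :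
    ∃ c₀ c₁ : ZMod 2, s = algebraMap (ZMod 2) S c₀ + algebraMap (ZMod 2) S c₁ * w := by
  obtain ⟨p, rfl⟩ := Ideal.Quotient.mk_surjective s
  refine ⟨p.coeff 0, p.coeff 1, ?_⟩
  rw [algebraMap_eq_mk_C, algebraMap_eq_mk_C, w, ← map_mul, ← map_add,
    Ideal.Quotient.mk_eq_mk_iff_sub_mem, Ideal.mem_span_singleton, X_pow_dvd_iff]
  intro d hd
  interval_cases d <;> simp

theorem eq_zero_of_add_mul_w_eq_zero {c₀ c₁ : ZMod 2}
    (h : algebraMap (ZMod 2) S c₀ + algebraMap (ZMod 2) S c₁ * w = 0) : c₀ = 0 ∧ c₁ = 0 := by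
  rw [algebraMap_eq_mk_C, algebraMap_eq_mk_C, w, ← map_mul, ← map_add,
    Ideal.Quotient.eq_zero_iff_mem, Ideal.mem_span_singleton, X_pow_dvd_iff] at h
  simpa using And.intro (h 0 two_pos) (h 1 one_lt_two)

end S

local notation "ι" => Polynomial.mapRingHom (algebraMap (ZMod 2) S)

theorem map_residue_ι (p : (ZMod 2)[X]) : (ι p).map S.residue = p := by
  rw [coe_mapRingHom, Polynomial.map_map, RingHom.ext_zmod (S.residue.comp _) (RingHom.id _),
    Polynomial.map_id]

theorem exists_eq_ι_add_C_w_mul (P : S[X]) : ∃ p q : (ZMod 2)[X], P = ι p + C w * ι q := by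
  induction P using Polynomial.induction_on' with
  | add P Q hP hQ =>
    obtain ⟨p₁, q₁, rfl⟩ := hP
    obtain ⟨p₂, q₂, rfl⟩ := hQ
    exact ⟨p₁ + p₂, q₁ + q₂, by simp only [map_add]; ring⟩
  | monomial k s =>
    obtain ⟨c₀, c₁, rfl⟩ := S.exists_eq_add_mul_w s
    refine ⟨monomial k c₀, monomial k c₁, ?_⟩
    simp only [coe_mapRingHom, map_monomial, C_mul_monomial, ← map_add, mul_comm w]

theorem eq_zero_of_ι_add_C_w_mul_eq_zero {p q : (ZMod 2)[X]} (h : ι p + C w * ι q = 0) :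
    p = 0 ∧ q = 0 := by
  have hcoeff (k : ℕ) : p.coeff k = 0 ∧ q.coeff k = 0 := by
    apply S.eq_zero_of_add_mul_w_eq_zero
    simpa [mul_comm w] using congrArg (coeff · k) h
  exact ⟨ext fun k => (hcoeff k).1, ext fun k => (hcoeff k).2⟩

theorem ι_add_C_w_mul_mul (u v p q : (ZMod 2)[X]) :
    (ι u + C w * ι v) * (ι p + C w * ι q) = ι (u * p) + C w * ι (u * q + v * p) := by
  have hww : (C w : S[X]) * C w = 0 := by rw [← C_mul, S.w_mul_w, C_0]
  simp only [map_add, map_mul]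
  linear_combination (ι v * ι q) * hww

theorem dvd_of_C_w_mul_ι_mem_span {f q : (ZMod 2)[X]} (h : C w * ι q ∈ Ideal.span {ι f}) :
    f ∣ q := by
  obtain ⟨P, hP⟩ := Ideal.mem_span_singleton.mp h
  obtain ⟨p₀, p₁, rfl⟩ := exists_eq_ι_add_C_w_mul P
  have hzero : ι (f * p₀) + C w * ι (f * p₁ - q) = 0 := by
    simp only [map_mul, map_sub] at hP ⊢
    linear_combination -hP
  exact ⟨p₁, (sub_eq_zero.mp (eq_zero_of_ι_add_C_w_mul_eq_zero hzero).2).symm⟩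

section CyclicCode

variable (f : (ZMod 2)[X])

def reduceW : S[X] ⧸ Ideal.span {ι f} →+* (ZMod 2)[X] ⧸ Ideal.span {f} :=
  Ideal.quotientMap _ (mapRingHom S.residue) <| (Ideal.span_singleton_le_iff_mem _).mpr <| by
    rw [Ideal.mem_comap, coe_mapRingHom, map_residue_ι]
    exact Ideal.mem_span_singleton_self f

theorem reduceW_mk (P : S[X]) :
    reduceW f (Ideal.Quotient.mk _ P) = Ideal.Quotient.mk _ (P.map S.residue) :=
  Ideal.quotientMap_mk

theorem reduceW_mk_ι_add_C_w_mul (p q : (ZMod 2)[X]) :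
    reduceW f (Ideal.Quotient.mk _ (ι p + C w * ι q)) = Ideal.Quotient.mk _ p := by
  rw [reduceW_mk, Polynomial.map_add, Polynomial.map_mul, map_C, S.residue_w, C_0, zero_mul,
    add_zero, map_residue_ι]

theorem reduceW_surjective : Function.Surjective (reduceW f) :=
  Ideal.quotientMap_surjective <| map_surjective _ fun c => ⟨_, S.residue_algebraMap c⟩

def mulW : (ZMod 2)[X] ⧸ Ideal.span {f} →+ S[X] ⧸ Ideal.span {ι f} :=
  (AddMonoidHom.mulLeft (Ideal.Quotient.mk _ (C w))).comp
    (Ideal.quotientMap _ ι <| (Ideal.span_singleton_le_iff_mem _).mpr <|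
      Ideal.mem_comap.mpr (Ideal.mem_span_singleton_self _)).toAddMonoidHom

theorem mulW_mk (q : (ZMod 2)[X]) :
    mulW f (Ideal.Quotient.mk _ q) = Ideal.Quotient.mk _ (C w * ι q) := by
  rw [mulW, AddMonoidHom.comp_apply, RingHom.toAddMonoidHom_eq_coe, AddMonoidHom.coe_coe,
    Ideal.quotientMap_mk, AddMonoidHom.coe_mulLeft, ← map_mul]

theorem mulW_injective : Function.Injective (mulW f) := by
  refine (injective_iff_map_eq_zero _).mpr fun r hr => ?_
  obtain ⟨q, rfl⟩ := Ideal.Quotient.mk_surjective r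
  rw [mulW_mk, Ideal.Quotient.eq_zero_iff_mem] at hr
  exact Ideal.Quotient.eq_zero_iff_mem.mpr
    (Ideal.mem_span_singleton.mpr (dvd_of_C_w_mul_ι_mem_span hr))

variable (a g : (ZMod 2)[X])

theorem mem_span_mk_ι_add_C_w_mul_iff {x : S[X] ⧸ Ideal.span {ι f}} :
    x ∈ Ideal.span {Ideal.Quotient.mk _ (ι g + C w * ι a)} ↔
      ∃ u v : (ZMod 2)[X], x = Ideal.Quotient.mk _ (ι (u * g) + C w * ι (u * a + v * g)) := by
  simp_rw [Ideal.mem_span_singleton', ← ι_add_C_w_mul_mul, map_mul]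
  constructor
  · rintro ⟨t, rfl⟩
    obtain ⟨P, rfl⟩ := Ideal.Quotient.mk_surjective t
    obtain ⟨u, v, rfl⟩ := exists_eq_ι_add_C_w_mul P
    exact ⟨u, v, rfl⟩
  · rintro ⟨u, v, rfl⟩
    exact ⟨_, rfl⟩

theorem mk_ι_eq_zero_of_dvd {p : (ZMod 2)[X]} (hp : f ∣ p) :
    Ideal.Quotient.mk (Ideal.span {ι f}) (ι p) = 0 :=
  Ideal.Quotient.eq_zero_iff_mem.mpr (Ideal.mem_span_singleton.mpr (map_dvd ι hp))

theorem reduceW_mulW (r : (ZMod 2)[X] ⧸ Ideal.span {f}) : reduceW f (mulW f r) = 0 := by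
  obtain ⟨q, rfl⟩ := Ideal.Quotient.mk_surjective r
  rw [mulW_mk, reduceW_mk, Polynomial.map_mul, map_C, S.residue_w, C_0, zero_mul, map_zero]

theorem span_inf_ker_reduceW (hsq : Squarefree f) (hag : a ∣ g) (hgf : g ∣ f) :
    (Ideal.span {Ideal.Quotient.mk _ (ι g + C w * ι a)}).toAddSubgroup ⊓
        (reduceW f).toAddMonoidHom.ker =
      (Ideal.span {Ideal.Quotient.mk (Ideal.span {f}) a}).toAddSubgroup.map (mulW f) := by
  obtain ⟨h, hh⟩ := hgf
  obtain ⟨b, hb⟩ := hag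
  have hg : g ≠ 0 := by
    rintro rfl
    exact hsq.ne_zero (by simp [hh])
  obtain ⟨p, q, hpq⟩ : IsCoprime h b := by
    rw [hh, hb, mul_assoc] at hsq
    exact (squarefree_mul_iff.mp hsq.of_mul_right).1.symm.isCoprime
  ext x
  simp only [AddSubgroup.mem_inf, Submodule.mem_toAddSubgroup, AddMonoidHom.mem_ker,
    RingHom.toAddMonoidHom_eq_coe, AddMonoidHom.coe_coe, AddSubgroup.mem_map]
  rw [mem_span_mk_ι_add_C_w_mul_iff]
  constructor
  · rintro ⟨⟨u, v, rfl⟩, hx⟩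
    rw [reduceW_mk_ι_add_C_w_mul, Ideal.Quotient.eq_zero_iff_mem, Ideal.mem_span_singleton] at hx
    obtain ⟨s, hs⟩ := hx
    have hu : u = h * s := mul_left_cancel₀ hg (by linear_combination hs + s * hh)
    refine ⟨Ideal.Quotient.mk _ (a * (h * s + v * b)),
      Ideal.mem_span_singleton'.mpr ⟨Ideal.Quotient.mk _ (h * s + v * b), ?_⟩, ?_⟩
    · rw [← map_mul, mul_comm]
    · rw [mulW_mk, map_add, mk_ι_eq_zero_of_dvd f ⟨s, hs⟩, zero_add, hu, hb]
      congr 3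
      ring
  · rintro ⟨_, hy, rfl⟩
    obtain ⟨t, rfl⟩ := Ideal.mem_span_singleton'.mp hy
    obtain ⟨t, rfl⟩ := Ideal.Quotient.mk_surjective t
    -- `p h + q b = 1` gives `t a = (t p h) a + (t q) g`, and `(t p h) g = (t p) f` vanishes.
    refine ⟨⟨t * p * h, t * q, ?_⟩, reduceW_mulW f _⟩
    rw [← map_mul, mulW_mk, map_add, mk_ι_eq_zero_of_dvd f ⟨t * p, by rw [hh]; ring⟩, zero_add]
    congr 3
    linear_combination (-(t * a)) * hpq - (t * q) * hb

theorem natCard_span_mk_ι_add_C_w_mul (hf : f.Monic) (hsq : Squarefree f) (ha : a.Monic)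
    (hg : g.Monic) (hag : a ∣ g) (hgf : g ∣ f) :
    Nat.card (Ideal.span {Ideal.Quotient.mk (Ideal.span {ι f}) (ι g + C w * ι a)}) =
      2 ^ (f.natDegree - g.natDegree) * 2 ^ (f.natDegree - a.natDegree) := by
  set code := Ideal.span {Ideal.Quotient.mk (Ideal.span {ι f}) (ι g + C w * ι a)}
  have himage : code.map (reduceW f) = Ideal.span {Ideal.Quotient.mk _ g} := by
    rw [Ideal.map_span, Set.image_singleton, reduceW_mk_ι_add_C_w_mul]
  have hcard (d : (ZMod 2)[X]) (hd : d.Monic) (hdf : d ∣ f) :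
      Nat.card (Ideal.span {Ideal.Quotient.mk (Ideal.span {f}) d}) =
        2 ^ (f.natDegree - d.natDegree) := by
    rw [natCard_span_mk_of_dvd hf hd hdf, Nat.card_zmod]
  calc Nat.card code
      = Nat.card (code.toAddSubgroup.map (reduceW f).toAddMonoidHom) *
          Nat.card (code.toAddSubgroup ⊓ (reduceW f).toAddMonoidHom.ker : AddSubgroup _) :=
        AddSubgroup.card_eq_card_map_mul_card_inf_ker _ code.toAddSubgroup
    _ = Nat.card (Ideal.span {Ideal.Quotient.mk (Ideal.span {f}) g}) *
          Nat.card (Ideal.span {Ideal.Quotient.mk (Ideal.span {f}) a}) := by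
        rw [← Ideal.toAddSubgroup_map_of_surjective (reduceW_surjective f), himage,
          span_inf_ker_reduceW f a g hsq hag hgf,
          AddSubgroup.card_map_of_injective (mulW_injective f)]
        rfl
    _ = 2 ^ (f.natDegree - g.natDegree) * 2 ^ (f.natDegree - a.natDegree) := by
        rw [hcard g hg hgf, hcard a ha (hag.trans hgf)]

end CyclicCode

theorem card_cyclic_code_over_S_general (n : ℕ) (hodd : Odd n)
    (a g : Polynomial (ZMod 2)) (ha : a.Monic) (hg : g.Monic)
    (hag : a ∣ g) (hgn : g ∣ (X ^ n - 1)) :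
    Nat.card
      (Ideal.span {Ideal.Quotient.mk (Ideal.span ({X ^ n - 1} : Set (Polynomial S)))
          (g.map (algebraMap (ZMod 2) S) + C w * a.map (algebraMap (ZMod 2) S))} :
        Ideal (Polynomial S ⧸ Ideal.span ({X ^ n - 1} : Set (Polynomial S)))) =
      2 ^ (2 * n - g.natDegree - a.natDegree) := by
  have hf : (X ^ n - 1 : (ZMod 2)[X]).Monic := by
    simpa using monic_X_pow_sub_C (1 : ZMod 2) hodd.pos.ne'
  have hsq : Squarefree (X ^ n - 1 : (ZMod 2)[X]) :=
    (X_pow_sub_one_separable_iff.mpr (ZMod.natCast_ne_zero_iff_odd.mpr hodd)).squarefree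
  have hdeg : (X ^ n - 1 : (ZMod 2)[X]).natDegree = n := by
    simpa using natDegree_X_pow_sub_C (n := n) (r := (1 : ZMod 2))
  have hdg := natDegree_le_of_dvd hgn hf.ne_zero
  have hda := natDegree_le_of_dvd (hag.trans hgn) hf.ne_zero
  have hcard := natCard_span_mk_ι_add_C_w_mul _ a g hf hsq ha hg hag hgn
  rw [map_sub, map_pow, map_one, coe_mapRingHom, Polynomial.map_X, hdeg, ← pow_add] at hcard
  rw [hcard]
  congr 1
  omega

/-- The cyclic code `C_w = ⟨g + w·a⟩` of odd length `n` over `S = F₂ + wF₂`, with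
`a ∣ g ∣ Yⁿ - 1` over `ZMod 2`, has cardinality `2^{2n - deg g - deg a}`. -/
theorem card_cyclic_code_over_S (n : ℕ) (hodd : Odd n) (hpos : 0 < n)
    (a g : Polynomial (ZMod 2)) (ha : a.Monic) (hg : g.Monic)
    (hag : a ∣ g) (hgn : g ∣ (X ^ n - 1)) :
    Nat.card
      (Ideal.span {Ideal.Quotient.mk (Ideal.span ({X ^ n - 1} : Set (Polynomial S)))
          (g.map (algebraMap (ZMod 2) S) + C w * a.map (algebraMap (ZMod 2) S))} :
        Ideal (Polynomial S ⧸ Ideal.span ({X ^ n - 1} : Set (Polynomial S)))) =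
      2 ^ (2 * n - g.natDegree - a.natDegree) :=
  card_cyclic_code_over_S_general n hodd a g ha hg hag hgn
end
end

section
/- Let n be an odd positive integer and let g ∈ (ZMod 2)[Y] be a monic divisor of Yⁿ - 1. Let C = { c : Fin n → ZMod 2 | the polynomial Σᵢ cᵢ·Yⁱ lies in the ideal of (ZMod 2)[Y] generated by g and Yⁿ - 1 } be the binary cyclic code of length n with generator polynomial g, and let C^⊥ = { y : Fin n → ZMod 2 | Σᵢ cᵢ·yᵢ = 0 for all c ∈ C } be its dual. Then C^⊥ ⊆ C if and only if g · ĝ divides Yⁿ - 1 in (ZMod 2)[Y], where ĝ(Y) = Y^{deg g}·g(1/Y) is the reciprocal polynomial of g. -/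
open Polynomial

noncomputable section

/-- The binary cyclic code of length `n` with generator polynomial `g`: the coefficient
vectors `c` such that `Σᵢ cᵢ·Yⁱ` lies in the ideal generated by `g` and `Yⁿ - 1`. -/
def binCyclicCode (n : ℕ) (g : Polynomial (ZMod 2)) : Set (Fin n → ZMod 2) :=
  {c | (∑ i : Fin n, C (c i) * X ^ (i : ℕ)) ∈
    Ideal.span ({g, X ^ n - 1} : Set (Polynomial (ZMod 2)))}

/-- The dual of a code of length `n` over a commutative ring `A`, with respect to the
standard inner product `Σᵢ cᵢyᵢ`. -/
def dualCode {A : Type*} [CommRing A] (n : ℕ) (D : Set (Fin n → A)) : Set (Fin n → A) :=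
  {y | ∀ c ∈ D, ∑ i, c i * y i = 0}

/-!
Identify `c : Fin n → K` with `c(X) = ∑ cᵢ Xⁱ` and write `Xⁿ - 1 = g h`. The inner product
`∑ cᵢ yᵢ` is the coefficient of `X^(n-1)` in `c(X) · X^(n-1) y(1/X)` reduced modulo `Xⁿ - 1`.
This pairing is nondegenerate on `K[X]/(Xⁿ - 1)`, so `y` is orthogonal to the ideal `(g)` exactly
when `h` divides the reflection `X^(n-1) y(1/X)`. Hence the dual code consists of the reflections of
the multiples of `h` of degree `< n`, and it lies in `(g)` iff `g ∣ ĥ`. Finally `ĝ ĥ = -(Xⁿ - 1)`,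
so `g ∣ ĥ ↔ g ĝ ∣ Xⁿ - 1`.
-/

namespace Polynomial

variable {R : Type*}

lemma reflect_eq_reverse_mul_X_pow [Semiring R] {p : R[X]} {N : ℕ} (hp : p.natDegree ≤ N) :
    p.reflect N = p.reverse * X ^ (N - p.natDegree) := by
  have h := reflect_mul p 1 le_rfl (natDegree_one.trans_le (Nat.zero_le (N - p.natDegree)))
  rwa [mul_one, Nat.add_sub_cancel' hp, reflect_one] at h

lemma natDegree_reflect_le_of_natDegree_le [Semiring R] {p : R[X]} {N : ℕ}
    (hp : p.natDegree ≤ N) : (p.reflect N).natDegree ≤ N :=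
  natDegree_reflect_le.trans (max_le le_rfl hp)

section XPowSubOne

variable [Ring R] {n : ℕ}

lemma monic_X_pow_sub_one (hn : 0 < n) : (X ^ n - 1 : R[X]).Monic := by
  simpa using monic_X_pow_sub_C (1 : R) hn.ne'

variable [Nontrivial R]

lemma natDegree_X_pow_sub_one : (X ^ n - 1 : R[X]).natDegree = n := by
  rw [← C_1, natDegree_X_pow_sub_C]

lemma X_pow_sub_one_ne_zero (hn : 0 < n) : (X ^ n - 1 : R[X]) ≠ 0 := by
  simpa using X_pow_sub_C_ne_zero hn (1 : R)

lemma reverse_X_pow_sub_one : (X ^ n - 1 : R[X]).reverse = -(X ^ n - 1) := by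
  rw [reverse, natDegree_X_pow_sub_one, ← C_1, reflect_sub, reflect_monomial, reflect_C,
    revAt_le le_rfl, Nat.sub_self]
  simp

lemma natDegree_modByMonic_X_pow_sub_one_lt (hn : 0 < n) (p : R[X]) :
    (p %ₘ (X ^ n - 1)).natDegree < n := by
  simpa only [natDegree_X_pow_sub_one] using
    natDegree_modByMonic_lt p (monic_X_pow_sub_one hn) fun h => by
      have := congrArg natDegree h
      rw [natDegree_X_pow_sub_one, natDegree_one] at this
      omega

end XPowSubOne

lemma isCoprime_X_X_pow_sub_one [CommRing R] {n : ℕ} (hn : 0 < n) :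
    IsCoprime (X : R[X]) (X ^ n - 1) :=
  ⟨X ^ (n - 1), -1, by rw [← pow_succ, Nat.sub_add_cancel hn]; ring⟩

lemma dvd_reverse_iff_mul_reverse_dvd [CommRing R] [IsDomain R] {n : ℕ} {g h : R[X]}
    (hn : 0 < n) (hgh : g * h = X ^ n - 1) : g ∣ h.reverse ↔ g * g.reverse ∣ X ^ n - 1 := by
  have hg0 : g.reverse ≠ 0 :=
    reverse_eq_zero.not.2 (left_ne_zero_of_mul (hgh ▸ X_pow_sub_one_ne_zero hn))
  rw [← dvd_neg (b := X ^ n - 1), ← reverse_X_pow_sub_one, ← hgh, reverse_mul_of_domain,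
    mul_comm g, mul_dvd_mul_iff_left hg0]

section CyclicCoeff

variable [CommRing R] {n : ℕ}

/-- The coefficient of `X ^ (n - 1)` in the reduction of `p` modulo `X ^ n - 1`. -/
def cyclicCoeff (n : ℕ) : R[X] →ₗ[R] R :=
  lsum fun k => if k % n = n - 1 then LinearMap.id else 0

lemma cyclicCoeff_monomial (k : ℕ) (a : R) :
    cyclicCoeff n (monomial k a) = if k % n = n - 1 then a else 0 := by
  rw [cyclicCoeff, lsum_apply, sum_monomial_index _ _ (by simp)]
  split_ifs <;> rfl

lemma cyclicCoeff_X_pow_mul (p : R[X]) : cyclicCoeff n (X ^ n * p) = cyclicCoeff n p := by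
  induction p using Polynomial.induction_on' with
  | add p q hp hq => rw [mul_add, map_add, map_add, hp, hq]
  | monomial k a =>
    rw [X_pow_mul_monomial, cyclicCoeff_monomial, cyclicCoeff_monomial, Nat.add_mod_right]

lemma cyclicCoeff_X_pow_sub_one_mul (p : R[X]) : cyclicCoeff n ((X ^ n - 1) * p) = 0 := by
  rw [sub_mul, one_mul, map_sub, cyclicCoeff_X_pow_mul, sub_self]

lemma cyclicCoeff_modByMonic_mul (p q : R[X]) :
    cyclicCoeff n ((p %ₘ (X ^ n - 1)) * q) = cyclicCoeff n (p * q) := by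
  conv_rhs => rw [← modByMonic_add_div p (X ^ n - 1)]
  rw [add_mul, mul_assoc, map_add, cyclicCoeff_X_pow_sub_one_mul, add_zero]

lemma cyclicCoeff_eq_coeff (hn : 0 < n) {p : R[X]} (hp : p.natDegree < 2 * n - 1) :
    cyclicCoeff n p = p.coeff (n - 1) := by
  rw [cyclicCoeff, lsum_apply, sum_def, Finset.sum_eq_single (n - 1)]
  · simp [Nat.mod_eq_of_lt (Nat.sub_lt hn one_pos)]
  · intro k hk hkn
    have hk' : k < 2 * n - 1 := (le_natDegree_of_mem_supp k hk).trans_lt hp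
    suffices k % n ≠ n - 1 by simp [this]
    intro hmod
    rcases lt_or_ge k n with hlt | hge
    · rw [Nat.mod_eq_of_lt hlt] at hmod; exact hkn hmod
    · rw [Nat.mod_eq_sub_mod hge, Nat.mod_eq_of_lt (by omega)] at hmod; omega
  · intro h; simp [notMem_support_iff.1 h]

lemma X_pow_sub_one_dvd_of_cyclicCoeff_X_pow_mul [Nontrivial R] (hn : 0 < n) {p : R[X]}
    (hp : ∀ k < n, cyclicCoeff n (X ^ k * p) = 0) : X ^ n - 1 ∣ p := by
  have hr := natDegree_modByMonic_X_pow_sub_one_lt hn p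
  rw [← modByMonic_eq_zero_iff_dvd (monic_X_pow_sub_one hn)]
  ext m
  rw [coeff_zero]
  rcases lt_or_ge m n with hm | hm
  · obtain ⟨k, hk⟩ : ∃ k, n - 1 = m + k := ⟨n - 1 - m, by omega⟩
    have h := hp k (by omega)
    have hdeg : (p %ₘ (X ^ n - 1) * X ^ k).natDegree < 2 * n - 1 :=
      natDegree_mul_le.trans_lt (by grw [natDegree_X_pow_le]; omega)
    rwa [mul_comm, ← cyclicCoeff_modByMonic_mul, cyclicCoeff_eq_coeff hn hdeg, hk,
      coeff_mul_X_pow] at h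
  · exact coeff_eq_zero_of_natDegree_lt (hr.trans_le hm)

variable [DecidableEq R]

lemma sum_mul_eq_cyclicCoeff (hn : 0 < n) (c y : Fin n → R) :
    ∑ i, c i * y i = cyclicCoeff n (ofFn n c * (ofFn n y).reflect (n - 1)) := by
  have hc := ofFn_natDegree_lt hn c
  have hy : ((ofFn n y).reflect (n - 1)).natDegree ≤ n - 1 :=
    natDegree_reflect_le_of_natDegree_le (by have := ofFn_natDegree_lt hn y; omega)
  rw [cyclicCoeff_eq_coeff hn (natDegree_mul_le.trans_lt (by omega)), coeff_mul,
    Finset.Nat.sum_antidiagonal_eq_sum_range_succ_mk, Nat.succ_eq_add_one, Nat.sub_add_cancel hn,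
    ← Fin.sum_univ_eq_sum_range]
  refine Finset.sum_congr rfl fun i _ => ?_
  rw [coeff_reflect, revAt_le (by omega), Nat.sub_sub_self (by omega),
    ofFn_coeff_eq_val_of_lt _ i.isLt, ofFn_coeff_eq_val_of_lt _ i.isLt]

end CyclicCoeff

end Polynomial

section CommRing

variable {R : Type*} [CommRing R] [DecidableEq R] [Nontrivial R] {n : ℕ}

lemma mem_dualCode_iff (hn : 0 < n) {g : R[X]} (hg : g ∣ X ^ n - 1) (y : Fin n → R) :
    y ∈ dualCode n {c | g ∣ ofFn n c} ↔ X ^ n - 1 ∣ g * (ofFn n y).reflect (n - 1) := by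
  constructor
  · intro hy
    refine X_pow_sub_one_dvd_of_cyclicCoeff_X_pow_mul hn fun k _ => ?_
    have hgr : g ∣ X ^ k * g %ₘ (X ^ n - 1) := by
      rw [modByMonic_eq_sub_mul_div]
      exact (dvd_mul_left g _).sub (hg.mul_right _)
    have hr : ofFn n (toFn n (X ^ k * g %ₘ (X ^ n - 1))) = X ^ k * g %ₘ (X ^ n - 1) :=
      ofFn_comp_toFn_eq_id_of_natDegree_lt (natDegree_modByMonic_X_pow_sub_one_lt hn _)
    have h := hy _ (show g ∣ ofFn n _ from hr ▸ hgr)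
    rwa [sum_mul_eq_cyclicCoeff hn, hr, cyclicCoeff_modByMonic_mul, mul_assoc] at h
  · rintro ⟨u, hu⟩ c ⟨t, ht⟩
    rw [sum_mul_eq_cyclicCoeff hn, ht, mul_right_comm, hu, mul_assoc,
      cyclicCoeff_X_pow_sub_one_mul]

end CommRing

section Field

variable {K : Type*} [Field K] [DecidableEq K] {n : ℕ} {g h : K[X]}

lemma dualCode_subset_iff_dvd_reverse (hn : 0 < n) (hgh : g * h = X ^ n - 1) :
    dualCode n {c | g ∣ ofFn n c} ⊆ {c | g ∣ ofFn n c} ↔ g ∣ h.reverse := by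
  have hg : g ∣ X ^ n - 1 := ⟨h, hgh.symm⟩
  have hgh0 : g * h ≠ 0 := hgh ▸ X_pow_sub_one_ne_zero hn
  have hg0 : g ≠ 0 := left_ne_zero_of_mul hgh0
  have hXg : IsCoprime X g := by
    have hX := isCoprime_X_X_pow_sub_one (R := K) hn
    rw [← hgh] at hX
    exact hX.of_mul_right_left
  constructor
  · intro hsub
    rcases (natDegree g).eq_zero_or_pos with hg' | hg'
    · exact (isUnit_iff_degree_eq_zero.2 (by rw [degree_eq_natDegree hg0, hg']; rfl)).dvd
    have hh : h.natDegree < n := by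
      have := congrArg natDegree hgh
      rw [natDegree_mul hg0 (right_ne_zero_of_mul hgh0), natDegree_X_pow_sub_one] at this
      omega
    have hh' : (h.reflect (n - 1)).natDegree < n :=
      (natDegree_reflect_le_of_natDegree_le (by omega)).trans_lt (by omega)
    have hmem : toFn n (h.reflect (n - 1)) ∈ dualCode n {c | g ∣ ofFn n c} := by
      rw [mem_dualCode_iff hn hg, ofFn_comp_toFn_eq_id_of_natDegree_lt hh', reflect_reflect, hgh]
    have hdvd : g ∣ ofFn n (toFn n (h.reflect (n - 1))) := hsub hmem
    rw [ofFn_comp_toFn_eq_id_of_natDegree_lt hh', reflect_eq_reverse_mul_X_pow (by omega)] at hdvd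
    exact (hXg.pow_left.symm).dvd_of_dvd_mul_right hdvd
  · intro hdvd y hy
    rw [mem_dualCode_iff hn hg, ← hgh, mul_dvd_mul_iff_left hg0] at hy
    obtain ⟨s, hs⟩ := hy
    have hw : ((ofFn n y).reflect (n - 1)).natDegree ≤ n - 1 :=
      natDegree_reflect_le_of_natDegree_le (by have := ofFn_natDegree_lt hn y; omega)
    rw [Set.mem_ofPred, ← reflect_reflect (N := n - 1) (p := ofFn n y),
      reflect_eq_reverse_mul_X_pow hw, hs, reverse_mul_of_domain]
    exact (hdvd.mul_right _).mul_right _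

end Field

lemma binCyclicCode_eq {n : ℕ} {g : (ZMod 2)[X]} (hg : g ∣ X ^ n - 1) :
    binCyclicCode n g = {c | g ∣ ofFn n c} := by
  ext c
  rw [binCyclicCode, Set.mem_ofPred, Set.mem_ofPred, Ideal.span_pair_eq_span_left_iff_dvd.2 hg,
    Ideal.mem_span_singleton, ofFn_eq_sum_monomial]
  simp only [C_mul_X_pow_eq_monomial]

theorem dual_subset_iff_reciprocal_dvd_general (n : ℕ) (hpos : 0 < n)
    (g : Polynomial (ZMod 2)) (hgn : g ∣ (X ^ n - 1)) :
    dualCode n (binCyclicCode n g) ⊆ binCyclicCode n g ↔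
      g * g.reverse ∣ (X ^ n - 1) := by
  obtain ⟨h, hgh⟩ := hgn
  rw [binCyclicCode_eq ⟨h, hgh⟩, dualCode_subset_iff_dvd_reverse hpos hgh.symm,
    dvd_reverse_iff_mul_reverse_dvd hpos hgh.symm]

/-- A binary cyclic code `C` of odd length `n` with generator polynomial `g` contains its
dual if and only if `Yⁿ - 1 ≡ 0 (mod g·ĝ)`, where `ĝ` is the reciprocal polynomial of `g`. -/
theorem dual_subset_iff_reciprocal_dvd (n : ℕ) (hodd : Odd n) (hpos : 0 < n)
    (g : Polynomial (ZMod 2)) (hg : g.Monic) (hgn : g ∣ (X ^ n - 1)) :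
    dualCode n (binCyclicCode n g) ⊆ binCyclicCode n g ↔
      g * g.reverse ∣ (X ^ n - 1) :=
  dual_subset_iff_reciprocal_dvd_general n hpos g hgn
end
end

section
/- R is not a chain ring: the ideals ⟨u⟩ and ⟨1 + u⟩ of R are incomparable, i.e., neither Ideal.span {u} ≤ Ideal.span {1 + u} nor Ideal.span {1 + u} ≤ Ideal.span {u} holds. -/
open Polynomial

noncomputable section

/-- Evaluation at a point `a` with `a ^ 3 = a` descends to `R`. -/
def ev (a : ZMod 2) (ha : a ^ 3 - a = 0) : R →+* ZMod 2 :=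
  Ideal.Quotient.lift _ (evalRingHom a) (by
    intro p hp
    rw [Ideal.mem_span_singleton] at hp
    obtain ⟨q, rfl⟩ := hp
    simp [ha])

@[simp] lemma ev_u (a : ZMod 2) (ha : a ^ 3 - a = 0) : ev a ha u = a := by
  simp [ev, u]

/-- `R` is not a chain ring: the ideals `⟨u⟩` and `⟨1 + u⟩` are incomparable. -/
theorem ideals_incomparable :
    ¬ Ideal.span ({u} : Set R) ≤ Ideal.span ({1 + u} : Set R) ∧
    ¬ Ideal.span ({1 + u} : Set R) ≤ Ideal.span ({u} : Set R) := by
  constructor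
  · intro h
    have hu : u ∈ Ideal.span ({1 + u} : Set R) := h (Ideal.mem_span_singleton_self u)
    rw [Ideal.mem_span_singleton] at hu
    obtain ⟨c, hc⟩ := hu
    have h1 : (1 : ZMod 2) ^ 3 - 1 = 0 := by decide
    have := congrArg (ev 1 h1) hc
    simp only [map_mul, map_add, map_one, ev_u, show ((1:ZMod 2)+1) = 0 from rfl, zero_mul] at this
    exact one_ne_zero this
  · intro h
    have hu : (1 + u) ∈ Ideal.span ({u} : Set R) := h (Ideal.mem_span_singleton_self _)
    rw [Ideal.mem_span_singleton] at hu
    obtain ⟨c, hc⟩ := hu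
    have h0 : (0 : ZMod 2) ^ 3 - 0 = 0 := by decide
    have := congrArg (ev 0 h0) hc
    simp at this
end
end

section
/- R is a semilocal ring with exactly two maximal ideals: an ideal m of R is maximal if and only if m = Ideal.span {u} or m = Ideal.span {1 + u}. -/
/-! Over `𝔽₂` we have `X³ - X = X (X + 1)²`, so `u (1 + u)² = 0` and every prime ideal of `R`
contains `u` or `1 + u`. Conversely `⟨u⟩` and `⟨1 + u⟩` are the images of the maximal ideals
`⟨X⟩ ⊇ ⟨X³ - X⟩` and `⟨X - 1⟩ ⊇ ⟨X³ - X⟩` of `𝔽₂[X]`, hence maximal. -/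

open Polynomial

noncomputable section

namespace Polynomial

variable {K : Type*} [Field K]

theorem isMaximal_span_mk_X_sub_C {f : K[X]} {a : K} (ha : f.IsRoot a) :
    (Ideal.span {Ideal.Quotient.mk (Ideal.span {f}) (X - C a)}).IsMaximal := by
  have : (Ideal.span {X - C a}).IsMaximal :=
    PrincipalIdealRing.isMaximal_of_irreducible (irreducible_X_sub_C a)
  rw [← Set.image_singleton, ← Ideal.map_span]
  refine Ideal.IsMaximal.map_of_surjective_of_ker_le Ideal.Quotient.mk_surjective ?_
  rw [Ideal.mk_ker, Ideal.span_singleton_le_span_singleton]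
  exact dvd_iff_isRoot.mpr ha

end Polynomial

theorem CharTwo.mul_one_add_sq {A : Type*} [CommRing A] [CharP A 2] (x : A) :
    x * (1 + x) ^ 2 = x ^ 3 - x := by
  linear_combination (x + x ^ 2) * CharTwo.two_eq_zero (R := A)

theorem u_mul_one_add_u_sq : u * (1 + u) ^ 2 = 0 := by
  have : u * (1 + u) ^ 2 = Ideal.Quotient.mk _ (X * (1 + X) ^ 2 : (ZMod 2)[X]) := by
    simp [u]
  rw [this, CharTwo.mul_one_add_sq]
  exact Ideal.Quotient.eq_zero_iff_mem.mpr (Ideal.mem_span_singleton_self _)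

theorem isMaximal_span_u : (Ideal.span {u}).IsMaximal := by
  simpa [u] using isMaximal_span_mk_X_sub_C (f := (X ^ 3 - X : (ZMod 2)[X])) (a := 0) (by simp)

theorem isMaximal_span_one_add_u : (Ideal.span {1 + u}).IsMaximal := by
  have : (X - C 1 : (ZMod 2)[X]) = 1 + X := by
    rw [map_one, CharTwo.sub_eq_add, add_comm]
  have h := isMaximal_span_mk_X_sub_C (f := (X ^ 3 - X : (ZMod 2)[X])) (a := 1) (by simp)
  rwa [this, map_add, map_one] at h

/-- `R` is a semilocal ring with exactly two maximal ideals: an ideal `m` of `R` is maximal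
if and only if `m = ⟨u⟩` or `m = ⟨1 + u⟩`. -/
theorem isMaximal_iff (m : Ideal R) :
    m.IsMaximal ↔ m = Ideal.span ({u} : Set R) ∨ m = Ideal.span ({1 + u} : Set R) := by
  refine ⟨fun hm => ?_, ?_⟩
  · have hzero : u * (1 + u) ^ 2 ∈ m := u_mul_one_add_u_sq ▸ m.zero_mem
    rcases hm.isPrime.mem_or_mem hzero with hu | hv_sq
    · left
      exact (isMaximal_span_u.eq_of_le hm.ne_top (Ideal.span_singleton_le_iff_mem m |>.mpr hu)).symm
    · right
      have hv : 1 + u ∈ m := hm.isPrime.mem_of_pow_mem 2 hv_sq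
      exact (isMaximal_span_one_add_u.eq_of_le hm.ne_top
        (Ideal.span_singleton_le_iff_mem m |>.mpr hv)).symm
  · rintro (rfl | rfl)
    exacts [isMaximal_span_u, isMaximal_span_one_add_u]
end
end
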